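/- Let b ≥ 3. For every positive integer n, the orbit of n under iteration of S_{1,b} eventually reaches either the fixed point 2b−2 or the cycle (2, 3, …, b−1, b). -/

import Mathlib

/-- The t-shifted Sloane map in base b: product of (digit + t) over base-b digits. -/
def shiftedSloane (t b n : ℕ) : ℕ := ((Nat.digits b n).map (· + t)).prod

/-!
Write `n = b q + r` with `0 ≤ r < b`. Since `S n = (r + 1) S q` and inductively `S q ≤ q + 1`,
the map satisfies `S n + (b - 1 - r) q ≤ n + 1`. Hence above `b` the orbit can only fail to go
down when `S n = n` (which forces `n = 2b - 2`) or when `S n = n + 1` (which forces `r = b - 1`);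
in the latter case `n + 1 = b (q + 1)` ends in the digit `0`, so `S (S n) = S (q + 1) < n`.
Strong induction therefore brings every orbit down to `[0, b]`, where `S m = m + 1` for `m < b`.
-/

section ShiftedSloane

variable {b : ℕ}

theorem shiftedSloane_eq_mul (t : ℕ) {n : ℕ} (hb : 2 ≤ b) (hn : 0 < n) :
    shiftedSloane t b n = (n % b + t) * shiftedSloane t b (n / b) := by
  simp [shiftedSloane, Nat.digits_def' hb hn]

theorem shiftedSloane_one_of_lt {n : ℕ} (hn : n < b) : shiftedSloane 1 b n = n + 1 := by
  rcases Nat.eq_zero_or_pos n with rfl | hn0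
  · simp [shiftedSloane]
  · simp [shiftedSloane, Nat.digits_of_lt b n hn0.ne' hn]

theorem shiftedSloane_one_base_mul (hb : 2 ≤ b) (m : ℕ) :
    shiftedSloane 1 b (b * m) = shiftedSloane 1 b m := by
  rcases Nat.eq_zero_or_pos m with rfl | hm
  · simp
  · rw [shiftedSloane_eq_mul 1 hb (by positivity), Nat.mul_mod_right,
      Nat.mul_div_cancel_left _ (by omega), zero_add, one_mul]

theorem shiftedSloane_one_add_le (hb : 2 ≤ b) (n : ℕ) :
    shiftedSloane 1 b n + (b - 1 - n % b) * (n / b) ≤ n + 1 := by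
  induction n using Nat.strong_induction_on with
  | _ n ih =>
  rcases Nat.eq_zero_or_pos n with rfl | hn
  · simp [shiftedSloane]
  set q := n / b
  set r := n % b
  have hSq : shiftedSloane 1 b q ≤ q + 1 :=
    le_of_add_le_left (ih q (Nat.div_lt_self hn (by omega)))
  have hr : r < b := Nat.mod_lt n (by omega)
  obtain ⟨s, hs⟩ : ∃ s, b = r + 1 + s := ⟨b - 1 - r, by omega⟩
  have hn_eq : n = (r + 1 + s) * q + r := by rw [← hs]; exact (Nat.div_add_mod n b).symm
  rw [shiftedSloane_eq_mul 1 hb hn, show b - 1 - r = s by omega]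
  calc (r + 1) * shiftedSloane 1 b q + s * q
      ≤ (r + 1) * (q + 1) + s * q := by gcongr
    _ = n + 1 := by rw [hn_eq]; ring

theorem shiftedSloane_one_le_succ (hb : 2 ≤ b) (n : ℕ) : shiftedSloane 1 b n ≤ n + 1 :=
  le_of_add_le_left (shiftedSloane_one_add_le hb n)

theorem eq_of_shiftedSloane_one_eq_self (hb : 2 ≤ b) {n : ℕ} (hn : b ≤ n)
    (hfix : shiftedSloane 1 b n = n) : n = 2 * b - 2 := by
  have hslack := shiftedSloane_one_add_le hb n
  have hq : 0 < n / b := Nat.div_pos hn (by omega)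
  have hr : n % b < b := Nat.mod_lt n (by omega)
  have hnqr := Nat.div_add_mod n b
  have hs : (b - 1 - n % b) * (n / b) ≤ 1 := by omega
  rcases Nat.lt_or_ge (n % b) (b - 1) with hr' | hr'
  · have hq1 : n / b = 1 := by
      have := le_trans (Nat.le_mul_of_pos_left (n / b) (by omega : 0 < b - 1 - n % b)) hs
      omega
    rw [hq1] at hs hnqr
    omega
  · -- the last digit is `b - 1`, yet `S n = b * S (n / b)` is divisible by `b`
    have hdvd : b ∣ n := by
      rw [← hfix, shiftedSloane_eq_mul 1 hb (by omega), show n % b + 1 = b by omega]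
      exact dvd_mul_right b _
    omega

theorem shiftedSloane_one_iterate_two_lt (hb : 3 ≤ b) {n : ℕ} (hn : b ≤ n)
    (hsucc : shiftedSloane 1 b n = n + 1) : shiftedSloane 1 b (shiftedSloane 1 b n) < n := by
  have hslack := shiftedSloane_one_add_le (b := b) (by omega) n
  have hq : 0 < n / b := Nat.div_pos hn (by omega)
  have hr : n % b < b := Nat.mod_lt n (by omega)
  have hnqr := Nat.div_add_mod n b
  have hr' : n % b = b - 1 := by
    by_contra hne
    have : 0 < (b - 1 - n % b) * (n / b) := Nat.mul_pos (by omega) hq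
    omega
  have hn1 : n + 1 = b * (n / b + 1) := by rw [mul_add]; omega
  have h3q : 3 * (n / b) ≤ b * (n / b) := Nat.mul_le_mul_right _ hb
  rw [hsucc, hn1, shiftedSloane_one_base_mul (by omega)]
  have := shiftedSloane_one_le_succ (b := b) (by omega) (n / b + 1)
  omega

theorem exists_iterate_shiftedSloane_one_lt (hb : 3 ≤ b) {n : ℕ} (hn : b ≤ n)
    (hne : n ≠ 2 * b - 2) : ∃ j, (shiftedSloane 1 b)^[j] n < n := by
  rcases (shiftedSloane_one_le_succ (b := b) (by omega) n).lt_or_eq with hle | hsucc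
  · rcases (Nat.lt_succ_iff.mp hle).lt_or_eq with hlt | hfix
    · exact ⟨1, hlt⟩
    · exact absurd (eq_of_shiftedSloane_one_eq_self (by omega) hn hfix) hne
  · exact ⟨2, shiftedSloane_one_iterate_two_lt hb hn hsucc⟩

end ShiftedSloane

theorem shifted_sloane_one_stabilizes_general (b n : ℕ) (hb : 3 ≤ b) :
    ∃ k : ℕ, (shiftedSloane 1 b)^[k] n = 2 * b - 2 ∨
      (2 ≤ (shiftedSloane 1 b)^[k] n ∧ (shiftedSloane 1 b)^[k] n ≤ b) := by
  induction n using Nat.strong_induction_on with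
  | _ n ih =>
  rcases le_or_gt n b with hnb | hbn
  · rcases le_or_gt 2 n with h2 | h2
    · exact ⟨0, Or.inr ⟨h2, hnb⟩⟩
    · have hS : ∀ m < b, shiftedSloane 1 b m = m + 1 := fun m hm => shiftedSloane_one_of_lt hm
      refine ⟨2 - n, Or.inr ?_⟩
      interval_cases n <;> simp [hS 0 (by omega), hS 1 (by omega)] <;> omega
  · by_cases hfix : n = 2 * b - 2
    · exact ⟨0, Or.inl hfix⟩
    obtain ⟨j, hj⟩ := exists_iterate_shiftedSloane_one_lt hb hbn.le hfix
    obtain ⟨k, hk⟩ := ih _ hj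
    exact ⟨k + j, by rwa [Function.iterate_add_apply]⟩

theorem shifted_sloane_one_stabilizes (b n : ℕ) (hb : 3 ≤ b) (hn : 0 < n) :
    ∃ k : ℕ, (shiftedSloane 1 b)^[k] n = 2 * b - 2 ∨
      (2 ≤ (shiftedSloane 1 b)^[k] n ∧ (shiftedSloane 1 b)^[k] n ≤ b) :=
  shifted_sloane_one_stabilizes_general b n hb
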